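/- Let V, V₁, V₂ ∈ ℝ² be affinely independent with det(V₁ − V, V₂ − V) > 0 (i.e., V₁, V₂ numbered counterclockwise around V), let K = convexHull{V, V₁, V₂}, let β : ℝ² → ℝ be the affine function with β(V) = 1, β(V₁) = β(V₂) = 0, and let s(x) = e(β(x)) with e(t) = (56t³ − 63t² + 18t − 1)/10. Then for every map v : ℝ² → ℝ² whose two components are polynomials of total degree at most 4, ∫_K s(x) · div v(x) dx = (1/200) · [ (V₁ − V)⊥ · Dv(V)(V₂ − V) − (V₂ − V)⊥ · Dv(V)(V₁ − V) ], where Dv(V) is the (Fréchet) derivative of v at V, div v is the divergence of v, and w⊥ = (−w^y, w^x) is the 90-degree counterclockwise rotation of w. -/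

import Mathlib

/-!
Pull `K` back to the reference triangle `{u, w ≥ 0, u + w ≤ 1}` along
`x = V + u (V₁ - V) + w (V₂ - V)`. The Jacobian is `D = det (V₁ - V, V₂ - V) > 0`, `β` becomes
`1 - u - w`, and `div v` stays a polynomial of degree at most three. By the Dirichlet integral
`∫ uⁱ wʲ (1 - u - w)ᵏ = i! j! k! / (i + j + k + 2)!`, the profile `stingProfile (1 - u - w)`
integrates every monomial `uⁱ wʲ` with `1 ≤ i + j ≤ 3` to `0` and the constant `1` to `1 / 200`,
so the left-hand side is `D · div v (V) / 200`. The right-hand side is the same number because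
`a⊥ · L b - b⊥ · L a = det (a, b) · tr L` for every linear map `L` of the plane.
-/

open MeasureTheory

noncomputable def pdiv (v : ℝ × ℝ → ℝ × ℝ) (x : ℝ × ℝ) : ℝ :=
  fderiv ℝ (fun y => (v y).1) x (1, 0) + fderiv ℝ (fun y => (v y).2) x (0, 1)

open Set
open scoped Nat

namespace MvPolynomial

theorem totalDegree_pderiv_le {R σ : Type*} [CommSemiring R] (i : σ) (p : MvPolynomial σ R) :
    (pderiv i p).totalDegree ≤ p.totalDegree - 1 := by
  classical
  refine Finset.sup_le fun m hm => ?_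
  have hcoeff : coeff (m + Finsupp.single i 1) p ≠ 0 := by
    rw [mem_support_iff, coeff_pderiv] at hm
    exact left_ne_zero_of_mul hm
  have hdeg := le_totalDegree (mem_support_iff.mpr hcoeff)
  rw [Finsupp.sum_add_index' (fun _ => rfl) (fun _ _ _ => rfl),
    Finsupp.sum_single_index rfl] at hdeg
  omega

theorem totalDegree_bind₁_le {R σ τ : Type*} [CommSemiring R]
    (f : σ → MvPolynomial τ R) (hf : ∀ i, (f i).totalDegree ≤ 1) (p : MvPolynomial σ R) :
    (bind₁ f p).totalDegree ≤ p.totalDegree := by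
  classical
  conv_lhs => rw [p.as_sum, map_sum]
  refine (totalDegree_finsetSum _ _).trans (Finset.sup_le fun m hm => ?_)
  rw [bind₁_monomial]
  calc (C (coeff m p) * m.prod fun i e => f i ^ e).totalDegree
      ≤ (m.prod fun i e => f i ^ e).totalDegree := by
        simpa using totalDegree_mul (C (coeff m p)) _
    _ ≤ ∑ i ∈ m.support, (f i ^ m i).totalDegree := totalDegree_finsetProd _ _
    _ ≤ ∑ i ∈ m.support, m i := Finset.sum_le_sum fun i _ =>
        (totalDegree_pow _ _).trans (by simpa using Nat.mul_le_mul_left (m i) (hf i))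
    _ ≤ p.totalDegree := le_totalDegree hm

theorem exists_totalDegree_le_eval_affine (q : MvPolynomial (Fin 2) ℝ) (c a b : ℝ × ℝ) :
    ∃ q' : MvPolynomial (Fin 2) ℝ, q'.totalDegree ≤ q.totalDegree ∧ ∀ p : ℝ × ℝ,
      eval ![(c + p.1 • a + p.2 • b).1, (c + p.1 • a + p.2 • b).2] q = eval ![p.1, p.2] q' := by
  have hlin : ∀ (r : ℝ) (k : Fin 2), (C r * X k : MvPolynomial (Fin 2) ℝ).totalDegree ≤ 1 :=
    fun r k => (totalDegree_mul _ _).trans (by simp)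
  have haffine : ∀ r s t : ℝ,
      (C r + C s * X 0 + C t * X 1 : MvPolynomial (Fin 2) ℝ).totalDegree ≤ 1 :=
    fun r s t => (totalDegree_add _ _).trans
      (max_le ((totalDegree_add _ _).trans (max_le (by simp) (hlin s 0))) (hlin t 1))
  refine ⟨bind₁ ![C c.1 + C a.1 * X 0 + C b.1 * X 1, C c.2 + C a.2 * X 0 + C b.2 * X 1] q,
    totalDegree_bind₁_le _ (fun i => by fin_cases i <;> exact haffine _ _ _) _, fun p => ?_⟩
  rw [eval, eval, eval₂Hom_bind₁]
  refine congrArg (fun g => eval₂Hom (RingHom.id ℝ) g q) (_root_.funext fun i => ?_)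
  fin_cases i <;> simp [mul_comm]

theorem eval_finTwo (q : MvPolynomial (Fin 2) ℝ) (x y : ℝ) :
    eval ![x, y] q = ∑ m ∈ q.support, coeff m q * (x ^ m 0 * y ^ m 1) := by
  rw [eval_eq']
  simp [Fin.prod_univ_two]

theorem hasFDerivAt_eval {𝕜 σ : Type*} [NontriviallyNormedField 𝕜] [Fintype σ]
    (p : MvPolynomial σ 𝕜) (x : σ → 𝕜) :
    HasFDerivAt (fun y => eval y p)
      (∑ i, eval x (pderiv i p) • (ContinuousLinearMap.proj i : (σ → 𝕜) →L[𝕜] 𝕜)) x := by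
  classical
  induction p using MvPolynomial.induction_on with
  | C a =>
    refine ((hasFDerivAt_const (𝕜 := 𝕜) a x).congr_fderiv ?_).congr_of_eventuallyEq
      (.of_forall fun y => eval_C a)
    ext z
    simp
  | add p q hp hq =>
    refine ((hp.add hq).congr_fderiv ?_).congr_of_eventuallyEq
      (.of_forall fun y => map_add (eval y) p q)
    ext z
    simp [add_mul, Finset.sum_add_distrib]
  | mul_X p i hp =>
    refine ((hp.mul (hasFDerivAt_apply i x)).congr_fderiv ?_).congr_of_eventuallyEq
      (.of_forall fun y => by simp)
    ext z
    simp [pderiv_X, Pi.single_apply, add_mul, Finset.sum_add_distrib, Finset.mul_sum,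
      apply_ite (eval x), ite_mul, mul_assoc]

theorem hasFDerivAt_eval_finTwo (p : MvPolynomial (Fin 2) ℝ) (x : ℝ × ℝ) :
    HasFDerivAt (fun y : ℝ × ℝ => eval ![y.1, y.2] p)
      (eval ![x.1, x.2] (pderiv 0 p) • ContinuousLinearMap.fst ℝ ℝ ℝ +
        eval ![x.1, x.2] (pderiv 1 p) • ContinuousLinearMap.snd ℝ ℝ ℝ) x := by
  refine ((hasFDerivAt_eval p ![x.1, x.2]).comp x
    (ContinuousLinearEquiv.finTwoArrow ℝ ℝ).symm.hasFDerivAt).congr_fderiv ?_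
  ext <;> simp [Fin.sum_univ_two]

end MvPolynomial

theorem integral_pow_mul_sub_pow (a : ℝ) (m n : ℕ) :
    ∫ w in (0 : ℝ)..a, w ^ m * (a - w) ^ n = a ^ (m + n + 1) * (m ! * n ! / (m + n + 1)! : ℝ) := by
  induction n generalizing m with
  | zero =>
    simp only [pow_zero, mul_one, integral_pow]
    push_cast [add_zero, Nat.factorial_succ]
    field_simp
    ring
  | succ n ih =>
    have hderiv : ∀ w ∈ uIcc 0 a, HasDerivAt (fun w => w ^ (m + 1) * (a - w) ^ (n + 1))
        ((m + 1) * (w ^ m * (a - w) ^ (n + 1)) - (n + 1) * (w ^ (m + 1) * (a - w) ^ n)) w :=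
      fun w _ => ((hasDerivAt_pow (m + 1) w).fun_mul
        (((hasDerivAt_id' w).const_sub a).fun_pow (n + 1))).congr_deriv (by push_cast; ring)
    -- integration by parts: `(m + 1) I(m, n + 1) = (n + 1) I(m + 1, n)`
    have hparts := intervalIntegral.integral_eq_sub_of_hasDerivAt hderiv
      (Continuous.intervalIntegrable (by fun_prop) _ _)
    rw [intervalIntegral.integral_sub (Continuous.intervalIntegrable (by fun_prop) _ _)
      (Continuous.intervalIntegrable (by fun_prop) _ _), intervalIntegral.integral_const_mul,
      intervalIntegral.integral_const_mul, ih] at hparts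
    simp only [sub_self, ne_eq, add_eq_zero, one_ne_zero, and_false, not_false_eq_true,
      zero_pow, mul_zero, sub_zero] at hparts
    rw [show m + 1 + n + 1 = m + (n + 1) + 1 by ring, Nat.factorial_succ m] at hparts
    rw [Nat.factorial_succ n]
    push_cast at hparts ⊢
    apply mul_left_cancel₀ (by positivity : (m : ℝ) + 1 ≠ 0)
    linear_combination hparts

def stdTriangle : Set (ℝ × ℝ) := {p | 0 ≤ p.1 ∧ 0 ≤ p.2 ∧ p.1 + p.2 ≤ 1}

theorem isClosed_stdTriangle : IsClosed stdTriangle :=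
  (isClosed_le continuous_const continuous_fst).inter
    ((isClosed_le continuous_const continuous_snd).inter
      (isClosed_le (continuous_fst.add continuous_snd) continuous_const))

theorem isCompact_stdTriangle : IsCompact stdTriangle :=
  (isCompact_Icc (a := ((0 : ℝ), (0 : ℝ))) (b := (1, 1))).of_isClosed_subset
    isClosed_stdTriangle fun _ ⟨h₁, h₂, h₃⟩ => ⟨⟨h₁, h₂⟩, ⟨by linarith, by linarith⟩⟩

theorem convex_stdTriangle : Convex ℝ stdTriangle := by
  rintro x ⟨hx₁, hx₂, hx₃⟩ y ⟨hy₁, hy₂, hy₃⟩ a b ha hb hab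
  simp only [stdTriangle, mem_ofPred_eq, Prod.fst_add, Prod.snd_add, Prod.smul_fst,
    Prod.smul_snd, smul_eq_mul]
  refine ⟨by positivity, by positivity, ?_⟩
  nlinarith [mul_le_mul_of_nonneg_left hx₃ ha, mul_le_mul_of_nonneg_left hy₃ hb]

theorem convexHull_stdTriangle_vertices :
    convexHull ℝ {((0 : ℝ), (0 : ℝ)), (1, 0), (0, 1)} = stdTriangle := by
  refine (convexHull_min ?_ convex_stdTriangle).antisymm fun p ⟨hp₁, hp₂, hp₃⟩ => ?_
  · rintro _ (rfl | rfl | rfl) <;> norm_num [stdTriangle]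
  · have := (convex_convexHull ℝ {((0 : ℝ), (0 : ℝ)), (1, 0), (0, 1)}).sum_mem
      (t := Finset.univ) (w := ![1 - p.1 - p.2, p.1, p.2]) (z := ![(0, 0), (1, 0), (0, 1)])
      (fun i _ => by
        fin_cases i <;> simp only [Fin.zero_eta, Fin.mk_one, Fin.reduceFinMk,
          Matrix.cons_val_zero, Matrix.cons_val_one, Matrix.cons_val, sub_nonneg] <;> linarith)
      (by
        simp only [Fin.sum_univ_three, Fin.isValue, Matrix.cons_val_zero, Matrix.cons_val_one,
          Matrix.cons_val]
        ring)
      (fun i _ => subset_convexHull ℝ _ (by fin_cases i <;> simp))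
    simpa [Fin.sum_univ_three] using this

theorem integrableOn_stdTriangle {f : ℝ × ℝ → ℝ} (hf : Continuous f) :
    IntegrableOn f stdTriangle :=
  hf.continuousOn.integrableOn_compact isCompact_stdTriangle

theorem indicator_stdTriangle_apply (f : ℝ × ℝ → ℝ) (u w : ℝ) :
    stdTriangle.indicator f (u, w) =
      (Icc 0 1).indicator (fun u => (Icc 0 (1 - u)).indicator (fun w => f (u, w)) w) u := by
  simp only [indicator_apply, stdTriangle, mem_ofPred_eq, mem_Icc]
  split_ifs <;> grind

theorem setIntegral_stdTriangle {f : ℝ × ℝ → ℝ} (hf : Continuous f) :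
    ∫ p in stdTriangle, f p = ∫ u in (0 : ℝ)..1, ∫ w in (0 : ℝ)..(1 - u), f (u, w) := by
  have hint : Integrable (stdTriangle.indicator f) (volume.prod volume) :=
    (integrable_indicator_iff isClosed_stdTriangle.measurableSet).mpr (integrableOn_stdTriangle hf)
  rw [← integral_indicator isClosed_stdTriangle.measurableSet, Measure.volume_eq_prod,
    integral_prod _ hint, intervalIntegral.integral_of_le zero_le_one,
    ← integral_Icc_eq_integral_Ioc, ← integral_indicator measurableSet_Icc]
  congr 1 with u
  simp_rw [indicator_stdTriangle_apply]
  by_cases hu : u ∈ Icc (0 : ℝ) 1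
  · simp only [indicator_of_mem hu]
    rw [integral_indicator measurableSet_Icc, integral_Icc_eq_integral_Ioc,
      intervalIntegral.integral_of_le (by linarith [hu.2])]
  · simp [indicator_of_notMem hu]

theorem integral_stdTriangle_monomial (i j k : ℕ) :
    ∫ p in stdTriangle, p.1 ^ i * p.2 ^ j * (1 - p.1 - p.2) ^ k =
      (i ! * j ! * k ! / (i + j + k + 2)! : ℝ) := by
  have hinner : ∀ u : ℝ, ∫ w in (0 : ℝ)..(1 - u), u ^ i * w ^ j * (1 - u - w) ^ k =
      (j ! * k ! / (j + k + 1)! : ℝ) * (u ^ i * (1 - u) ^ (j + k + 1)) := by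
    intro u
    simp_rw [mul_assoc, intervalIntegral.integral_const_mul, integral_pow_mul_sub_pow]
    ring
  rw [setIntegral_stdTriangle (by fun_prop)]
  simp_rw [hinner, intervalIntegral.integral_const_mul, integral_pow_mul_sub_pow,
    show i + (j + k + 1) + 1 = i + j + k + 2 by ring]
  push_cast [Nat.factorial_succ]
  field_simp
  ring

theorem setIntegral_convexHull_eq_abs_det_mul (V V₁ V₂ : ℝ × ℝ)
    (hdet : (V₁.1 - V.1) * (V₂.2 - V.2) - (V₁.2 - V.2) * (V₂.1 - V.1) ≠ 0) (f : ℝ × ℝ → ℝ) :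
    ∫ x in convexHull ℝ {V, V₁, V₂}, f x =
      |(V₁.1 - V.1) * (V₂.2 - V.2) - (V₁.2 - V.2) * (V₂.1 - V.1)| *
        ∫ p in stdTriangle, f (V + p.1 • (V₁ - V) + p.2 • (V₂ - V)) := by
  set L : ℝ × ℝ →ₗ[ℝ] ℝ × ℝ := Matrix.toLin (.finTwoProd ℝ) (.finTwoProd ℝ)
    !![V₁.1 - V.1, V₂.1 - V.1; V₁.2 - V.2, V₂.2 - V.2]
  have hL : ∀ p, L p + V = V + p.1 • (V₁ - V) + p.2 • (V₂ - V) := fun p => by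
    ext <;> simp only [Matrix.toLin_finTwoProd_apply, Prod.fst_add, Prod.snd_add, Prod.smul_fst,
      Prod.smul_snd, Prod.fst_sub, Prod.snd_sub, smul_eq_mul, L] <;> ring
  have hdetL : LinearMap.det L = (V₁.1 - V.1) * (V₂.2 - V.2) - (V₁.2 - V.2) * (V₂.1 - V.1) := by
    simp only [LinearMap.det_toLin, Matrix.det_fin_two_of, L]
    ring
  let T : (ℝ × ℝ) →ᵃ[ℝ] ℝ × ℝ := L.toAffineMap + AffineMap.const ℝ (ℝ × ℝ) V
  have himage : T '' stdTriangle = convexHull ℝ {V, V₁, V₂} := by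
    rw [← convexHull_stdTriangle_vertices, AffineMap.image_convexHull]
    simp [T, hL, image_insert_eq]
  have hinj : InjOn T stdTriangle := fun p _ q _ hpq => by
    simpa [T] using (LinearMap.equivOfDetNeZero L (hdetL ▸ hdet)).injective
      (add_right_cancel (b := V) (by simpa [T] using hpq))
  have hTL : ⇑T = fun p => L.toContinuousLinearMap p + V := funext fun p => by simp [T]
  rw [hTL] at himage hinj
  rw [← himage, integral_image_eq_integral_abs_det_fderiv_smul volume
    isClosed_stdTriangle.measurableSet
    (fun p _ => (L.toContinuousLinearMap.hasFDerivAt.add_const V).hasFDerivWithinAt) hinj]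
  simp [LinearMap.det_toContinuousLinearMap, hdetL, hL, integral_const_mul]

noncomputable def stingProfile (t : ℝ) : ℝ := (56 * t ^ 3 - 63 * t ^ 2 + 18 * t - 1) / 10

@[fun_prop]
theorem continuous_stingProfile : Continuous stingProfile := by
  unfold stingProfile
  fun_prop

theorem integral_stdTriangle_stingProfile_mul_monomial {i j : ℕ} (hij : i + j ≤ 3) :
    ∫ p in stdTriangle, stingProfile (1 - p.1 - p.2) * (p.1 ^ i * p.2 ^ j) =
      (0 : ℝ) ^ i * 0 ^ j / 200 := by
  let c : Fin 4 → ℝ := ![-1 / 10, 18 / 10, -63 / 10, 56 / 10]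
  have hexpand : ∀ p : ℝ × ℝ, stingProfile (1 - p.1 - p.2) * (p.1 ^ i * p.2 ^ j) =
      ∑ k : Fin 4, c k * (p.1 ^ i * p.2 ^ j * (1 - p.1 - p.2) ^ (k : ℕ)) := by
    intro p
    simp only [stingProfile, Fin.sum_univ_four, Fin.isValue, Matrix.cons_val_zero,
      Fin.coe_ofNat_eq_mod, Nat.zero_mod, pow_zero, mul_one, Matrix.cons_val_one, Nat.one_mod,
      pow_one, Matrix.cons_val, Nat.reduceMod, Nat.mod_succ, c]
    ring
  simp_rw [hexpand]
  rw [integral_finsetSum _ fun k _ => (integrableOn_stdTriangle (by fun_prop)).const_mul _]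
  simp_rw [integral_const_mul, integral_stdTriangle_monomial]
  simp only [Fin.sum_univ_four, Fin.isValue, Matrix.cons_val_zero, Fin.coe_ofNat_eq_mod,
    Nat.zero_mod, Nat.factorial_zero, Nat.cast_one, mul_one, add_zero, Matrix.cons_val_one,
    Nat.one_mod, Nat.factorial_one, Matrix.cons_val, Nat.reduceMod, Nat.factorial_two,
    Nat.cast_ofNat, Nat.mod_succ, c]
  have hi : i ≤ 3 := by omega
  have hj : j ≤ 3 := by omega
  interval_cases i <;> interval_cases j <;> (try omega) <;>
    norm_num [Nat.factorial]

theorem integral_stdTriangle_stingProfile_mul_eval {q : MvPolynomial (Fin 2) ℝ}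
    (hq : q.totalDegree ≤ 3) :
    ∫ p in stdTriangle, stingProfile (1 - p.1 - p.2) * MvPolynomial.eval ![p.1, p.2] q =
      MvPolynomial.eval ![0, 0] q / 200 := by
  simp_rw [MvPolynomial.eval_finTwo, Finset.mul_sum, Finset.sum_div]
  rw [integral_finsetSum _ fun m _ => (integrableOn_stdTriangle (by fun_prop))]
  refine Finset.sum_congr rfl fun m hm => ?_
  have hdeg : m 0 + m 1 ≤ 3 := by
    simpa [Finsupp.sum_fintype, Fin.sum_univ_two] using
      (MvPolynomial.le_totalDegree hm).trans hq
  simp_rw [mul_left_comm (stingProfile _) (q.coeff m), integral_const_mul,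
    integral_stdTriangle_stingProfile_mul_monomial hdeg, mul_div_assoc]

theorem setIntegral_convexHull_stingProfile_mul_eval (V V₁ V₂ : ℝ × ℝ)
    (hccw : 0 < (V₁.1 - V.1) * (V₂.2 - V.2) - (V₁.2 - V.2) * (V₂.1 - V.1))
    (β : (ℝ × ℝ) →ᵃ[ℝ] ℝ) (hβV : β V = 1) (hβ1 : β V₁ = 0) (hβ2 : β V₂ = 0)
    {q : MvPolynomial (Fin 2) ℝ} (hq : q.totalDegree ≤ 3) :
    ∫ x in convexHull ℝ {V, V₁, V₂}, stingProfile (β x) * MvPolynomial.eval ![x.1, x.2] q =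
      ((V₁.1 - V.1) * (V₂.2 - V.2) - (V₁.2 - V.2) * (V₂.1 - V.1)) *
        MvPolynomial.eval ![V.1, V.2] q / 200 := by
  obtain ⟨q', hq'deg, hq'⟩ := q.exists_totalDegree_le_eval_affine V (V₁ - V) (V₂ - V)
  have hβT : ∀ p : ℝ × ℝ, β (V + p.1 • (V₁ - V) + p.2 • (V₂ - V)) = 1 - p.1 - p.2 := by
    intro p
    rw [show V + p.1 • (V₁ - V) + p.2 • (V₂ - V) = (p.1 • (V₁ -ᵥ V) + p.2 • (V₂ -ᵥ V)) +ᵥ V by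
        simp only [vadd_eq_add, vsub_eq_sub]; abel,
      β.map_vadd, map_add, map_smul, map_smul, β.linearMap_vsub, β.linearMap_vsub, hβV, hβ1, hβ2]
    simp only [vsub_eq_sub, vadd_eq_add, smul_eq_mul]
    ring
  rw [setIntegral_convexHull_eq_abs_det_mul V V₁ V₂ hccw.ne', abs_of_pos hccw]
  simp_rw [hβT, hq']
  rw [integral_stdTriangle_stingProfile_mul_eval (hq'deg.trans hq),
    show (![0, 0] : Fin 2 → ℝ) = ![(0 : ℝ × ℝ).1, (0 : ℝ × ℝ).2] from rfl, ← hq' 0]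
  simp only [Prod.fst_zero, Prod.snd_zero, zero_smul, add_zero]
  ring

theorem pdiv_eq_fderiv {v : ℝ × ℝ → ℝ × ℝ} {x : ℝ × ℝ} (hv : DifferentiableAt ℝ v x) :
    pdiv v x = (fderiv ℝ v x (1, 0)).1 + (fderiv ℝ v x (0, 1)).2 := by
  simp [pdiv, fderiv.fst hv, fderiv.snd hv]

theorem pdiv_eval (p₁ p₂ : MvPolynomial (Fin 2) ℝ) (x : ℝ × ℝ) :
    pdiv (fun y => (MvPolynomial.eval ![y.1, y.2] p₁, MvPolynomial.eval ![y.1, y.2] p₂)) x =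
      MvPolynomial.eval ![x.1, x.2] (MvPolynomial.pderiv 0 p₁ + MvPolynomial.pderiv 1 p₂) := by
  simp [pdiv, (MvPolynomial.hasFDerivAt_eval_finTwo p₁ x).fderiv,
    (MvPolynomial.hasFDerivAt_eval_finTwo p₂ x).fderiv]

theorem perp_dot_sub_perp_dot_eq_det_mul_trace (L : ℝ × ℝ →L[ℝ] ℝ × ℝ) (a b : ℝ × ℝ) :
    (-a.2 * (L b).1 + a.1 * (L b).2) - (-b.2 * (L a).1 + b.1 * (L a).2) =
      (a.1 * b.2 - a.2 * b.1) * ((L (1, 0)).1 + (L (0, 1)).2) := by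
  have hdecomp : ∀ z : ℝ × ℝ, z = z.1 • ((1 : ℝ), (0 : ℝ)) + z.2 • ((0 : ℝ), (1 : ℝ)) :=
    fun z => by ext <;> simp
  rw [hdecomp a, hdecomp b]
  simp only [map_add, map_smul, Prod.fst_add, Prod.snd_add, Prod.smul_fst, Prod.smul_snd,
    smul_eq_mul, mul_one, mul_zero, add_zero, zero_add]
  ring

theorem sting_divergence_quadrature_general (V V₁ V₂ : ℝ × ℝ)
    (hccw : 0 < (V₁.1 - V.1) * (V₂.2 - V.2) - (V₁.2 - V.2) * (V₂.1 - V.1))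
    (β : (ℝ × ℝ) →ᵃ[ℝ] ℝ) (hβV : β V = 1) (hβ1 : β V₁ = 0) (hβ2 : β V₂ = 0)
    (s : ℝ × ℝ → ℝ)
    (hs : ∀ x, s x = (56 * (β x) ^ 3 - 63 * (β x) ^ 2 + 18 * (β x) - 1) / 10)
    (p₁ p₂ : MvPolynomial (Fin 2) ℝ)
    (hp₁ : p₁.totalDegree ≤ 4) (hp₂ : p₂.totalDegree ≤ 4)
    (v : ℝ × ℝ → ℝ × ℝ)
    (hv : ∀ x, v x = (MvPolynomial.eval ![x.1, x.2] p₁, MvPolynomial.eval ![x.1, x.2] p₂)) :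
    ∫ x in convexHull ℝ {V, V₁, V₂}, s x * pdiv v x =
      (1 / 200) *
        (((-(V₁.2 - V.2)) * (fderiv ℝ v V (V₂ - V)).1 +
            (V₁.1 - V.1) * (fderiv ℝ v V (V₂ - V)).2) -
          ((-(V₂.2 - V.2)) * (fderiv ℝ v V (V₁ - V)).1 +
            (V₂.1 - V.1) * (fderiv ℝ v V (V₁ - V)).2)) := by
  have hperp := perp_dot_sub_perp_dot_eq_det_mul_trace (fderiv ℝ v V) (V₁ - V) (V₂ - V)
  simp only [Prod.fst_sub, Prod.snd_sub] at hperp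
  obtain rfl : s = fun x => stingProfile (β x) := funext hs
  obtain rfl := funext hv
  have hdiv : (MvPolynomial.pderiv 0 p₁ + MvPolynomial.pderiv 1 p₂).totalDegree ≤ 3 :=
    (MvPolynomial.totalDegree_add _ _).trans <| max_le
      ((MvPolynomial.totalDegree_pderiv_le 0 p₁).trans (by omega))
      ((MvPolynomial.totalDegree_pderiv_le 1 p₂).trans (by omega))
  have hdiff := ((MvPolynomial.hasFDerivAt_eval_finTwo p₁ V).prodMk
    (MvPolynomial.hasFDerivAt_eval_finTwo p₂ V)).differentiableAt
  rw [hperp, ← pdiv_eq_fderiv hdiff, pdiv_eval]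
  simp_rw [pdiv_eval]
  rw [setIntegral_convexHull_stingProfile_mul_eval V V₁ V₂ hccw β hβV hβ1 hβ2 hdiv]
  ring

/-- Lemma 4.2: the quadrature rule for the sting function against the divergence of a
quartic vector field.  Here `V, V₁, V₂` are the vertices of `K` numbered
counterclockwise, `β` the barycentric coordinate of `V`, and `w⊥ = (−w.2, w.1)`. -/
theorem sting_divergence_quadrature (V V₁ V₂ : ℝ × ℝ)
    (hindep : AffineIndependent ℝ ![V, V₁, V₂])
    (hccw : 0 < (V₁.1 - V.1) * (V₂.2 - V.2) - (V₁.2 - V.2) * (V₂.1 - V.1))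
    (β : (ℝ × ℝ) →ᵃ[ℝ] ℝ) (hβV : β V = 1) (hβ1 : β V₁ = 0) (hβ2 : β V₂ = 0)
    (s : ℝ × ℝ → ℝ)
    (hs : ∀ x, s x = (56 * (β x) ^ 3 - 63 * (β x) ^ 2 + 18 * (β x) - 1) / 10)
    (p₁ p₂ : MvPolynomial (Fin 2) ℝ)
    (hp₁ : p₁.totalDegree ≤ 4) (hp₂ : p₂.totalDegree ≤ 4)
    (v : ℝ × ℝ → ℝ × ℝ)
    (hv : ∀ x, v x = (MvPolynomial.eval ![x.1, x.2] p₁, MvPolynomial.eval ![x.1, x.2] p₂)) :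
    ∫ x in convexHull ℝ {V, V₁, V₂}, s x * pdiv v x =
      (1 / 200) *
        (((-(V₁.2 - V.2)) * (fderiv ℝ v V (V₂ - V)).1 +
            (V₁.1 - V.1) * (fderiv ℝ v V (V₂ - V)).2) -
          ((-(V₂.2 - V.2)) * (fderiv ℝ v V (V₁ - V)).1 +
            (V₂.1 - V.1) * (fderiv ℝ v V (V₁ - V)).2)) :=
  sting_divergence_quadrature_general V V₁ V₂ hccw β hβV hβ1 hβ2 s hs p₁ p₂ hp₁ hp₂ v hv
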